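/- Let 𝒞 be the circle of radius ρ in the xy-plane in ℝ³ centered at the origin, with constant positive density λ, and V its gravitational potential. For a sequence rₙ ∈ ℝ³ ∖ 𝒞, V(rₙ) → −∞ if and only if dist(rₙ, 𝒞) → 0. -/

import Mathlib

open Real Set Filter

/-- The point of the circle of radius `ρ` in the `xy`-plane at angle `θ`. -/
noncomputable def circlePt (ρ θ : ℝ) : EuclideanSpace ℝ (Fin 3) :=
  (WithLp.equiv 2 (Fin 3 → ℝ)).symm ![ρ * Real.cos θ, ρ * Real.sin θ, 0]

/-- The circle of radius `ρ` in the `xy`-plane centered at the origin. -/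
def circleSet (ρ : ℝ) : Set (EuclideanSpace ℝ (Fin 3)) := Set.range (circlePt ρ)

/-- The gravitational potential of the homogeneous circle of radius `ρ` and density `lam`. -/
noncomputable def circlePotential (lam ρ : ℝ) (r : EuclideanSpace ℝ (Fin 3)) : ℝ :=
  -∫ θ in (0:ℝ)..(2 * π), lam * ρ / dist r (circlePt ρ θ)

/-! Write `γ = circlePt ρ` and `d = dist(r, 𝒞)`. The integrand `λρ / ‖r - γ θ‖` is at most
`λρ / d`, so `-V(r) ≤ 2πλρ / d` and `V(rₙ) → -∞` forces `d → 0`. Conversely, `γ` is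
`ρ`-Lipschitz, so if `γ θ₀` is a nearest point of the circle the integrand is at least
`λρ / (d + ρ (θ - θ₀))` on `[θ₀, θ₀ + 1]`; hence `-V(r) ≥ λ log (1 + ρ / d)`, which blows up
as `d → 0`. -/

open Metric intervalIntegral Topology

theorem integral_inv_add_mul {a b : ℝ} (ha : 0 < a) (hb : 0 < b) :
    ∫ x in (0:ℝ)..1, (a + b * x)⁻¹ = b⁻¹ * log ((a + b) / a) := by
  rw [integral_comp_add_mul (fun x => x⁻¹) hb.ne', mul_zero, add_zero, mul_one,
    integral_inv_of_pos ha (by linarith), smul_eq_mul]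

section circle

variable {ρ : ℝ}

theorem continuous_circlePt (ρ : ℝ) : Continuous (circlePt ρ) := by
  refine (PiLp.continuous_toLp 2 _).comp (continuous_pi fun i => ?_)
  fin_cases i <;> simp <;> fun_prop

theorem circlePt_periodic (ρ : ℝ) : Function.Periodic (circlePt ρ) (2 * π) := by
  intro θ
  simp [circlePt, cos_add_two_pi, sin_add_two_pi]

theorem dist_circlePt_sq (ρ a b : ℝ) :
    dist (circlePt ρ a) (circlePt ρ b) ^ 2 = 2 * ρ ^ 2 * (1 - cos (a - b)) := by
  rw [EuclideanSpace.dist_eq, sq_sqrt (by positivity), Fin.sum_univ_three]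
  simp only [circlePt, WithLp.equiv_symm_apply, PiLp.toLp_apply, Matrix.cons_val_zero,
    Matrix.cons_val_one, Matrix.cons_val, Real.dist_eq, sq_abs, sub_self, cos_sub]
  linear_combination ρ ^ 2 * (sin_sq_add_cos_sq a + sin_sq_add_cos_sq b)

theorem dist_circlePt_le (hρ : 0 ≤ ρ) (a b : ℝ) :
    dist (circlePt ρ a) (circlePt ρ b) ≤ ρ * |a - b| := by
  rw [← pow_le_pow_iff_left₀ dist_nonneg (by positivity) two_ne_zero, dist_circlePt_sq, mul_pow,
    sq_abs]
  nlinarith [one_sub_sq_div_two_le_cos (x := a - b), sq_nonneg ρ]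

theorem isCompact_circleSet (ρ : ℝ) : IsCompact (circleSet ρ) := by
  have : circleSet ρ = circlePt ρ '' Icc 0 (2 * π) := by
    refine (image_subset_range _ _).antisymm' ?_
    rintro _ ⟨θ, rfl⟩
    obtain ⟨θ', hθ', hθ⟩ := (circlePt_periodic ρ).exists_mem_Ico₀ two_pi_pos θ
    exact ⟨θ', Ico_subset_Icc_self hθ', hθ.symm⟩
  rw [this]
  exact isCompact_Icc.image (continuous_circlePt ρ)

theorem circleSet_nonempty (ρ : ℝ) : (circleSet ρ).Nonempty := range_nonempty _

theorem infDist_circleSet_pos {r : EuclideanSpace ℝ (Fin 3)} (hr : r ∉ circleSet ρ) :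
    0 < infDist r (circleSet ρ) :=
  ((isCompact_circleSet ρ).isClosed.notMem_iff_infDist_pos (circleSet_nonempty ρ)).1 hr

end circle

section potential

variable {lam ρ : ℝ} {r : EuclideanSpace ℝ (Fin 3)}

theorem dist_circlePt_pos (hr : r ∉ circleSet ρ) (θ : ℝ) : 0 < dist r (circlePt ρ θ) :=
  dist_pos.2 fun h => hr (h ▸ mem_range_self θ)

theorem continuous_div_dist_circlePt (hr : r ∉ circleSet ρ) :
    Continuous fun θ => lam * ρ / dist r (circlePt ρ θ) :=
  continuous_const.div (continuous_const.dist (continuous_circlePt ρ))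
    fun θ => (dist_circlePt_pos hr θ).ne'

theorem neg_circlePotential_le (hlam : 0 ≤ lam) (hρ : 0 ≤ ρ) (hr : r ∉ circleSet ρ) :
    -circlePotential lam ρ r ≤ 2 * π * lam * ρ / infDist r (circleSet ρ) := by
  have hd := infDist_circleSet_pos hr
  calc -circlePotential lam ρ r
      ≤ ∫ _ in (0:ℝ)..(2 * π), lam * ρ / infDist r (circleSet ρ) := by
        rw [circlePotential, neg_neg]
        refine integral_mono_on two_pi_pos.le
          ((continuous_div_dist_circlePt hr).intervalIntegrable _ _) intervalIntegrable_const
          fun θ _ => div_le_div_of_nonneg_left (by positivity) hd ?_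
        exact infDist_le_dist_of_mem (mem_range_self θ)
    _ = 2 * π * lam * ρ / infDist r (circleSet ρ) := by
        rw [intervalIntegral.integral_const, smul_eq_mul]
        ring

theorem mul_log_one_add_div_le_neg_circlePotential (hlam : 0 ≤ lam) (hρ : 0 < ρ)
    (hr : r ∉ circleSet ρ) :
    lam * log (1 + ρ / infDist r (circleSet ρ)) ≤ -circlePotential lam ρ r := by
  set d := infDist r (circleSet ρ)
  have hd : 0 < d := infDist_circleSet_pos hr
  obtain ⟨_, ⟨θ₀, rfl⟩, hθ₀⟩ :=
    (isCompact_circleSet ρ).exists_infDist_eq_dist (circleSet_nonempty ρ) r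
  set f := fun θ => lam * ρ / dist r (circlePt ρ θ)
  have hf : Continuous f := continuous_div_dist_circlePt hr
  have hf_nonneg : ∀ θ, 0 ≤ f θ := fun θ => by positivity
  have hf_periodic : Function.Periodic f (2 * π) := fun θ => by
    simp only [f, circlePt_periodic ρ θ]
  have hnear : ∀ x ∈ Icc (0:ℝ) 1, dist r (circlePt ρ (θ₀ + x)) ≤ d + ρ * x := fun x hx =>
    calc dist r (circlePt ρ (θ₀ + x))
        ≤ dist r (circlePt ρ θ₀) + dist (circlePt ρ θ₀) (circlePt ρ (θ₀ + x)) :=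
          dist_triangle _ _ _
      _ ≤ d + ρ * x := by
        rw [← hθ₀]
        have := dist_circlePt_le hρ.le θ₀ (θ₀ + x)
        rw [sub_add_cancel_left, abs_neg, abs_of_nonneg hx.1] at this
        linarith
  calc lam * log (1 + ρ / d)
      = ∫ x in (0:ℝ)..1, lam * ρ * (d + ρ * x)⁻¹ := by
        rw [intervalIntegral.integral_const_mul, integral_inv_add_mul hd hρ]
        field_simp
    _ ≤ ∫ x in (0:ℝ)..1, f (θ₀ + x) := by
        refine integral_mono_on zero_le_one ?_
          ((hf.comp (continuous_const_add θ₀)).intervalIntegrable _ _) fun x hx => ?_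
        · refine ContinuousOn.intervalIntegrable_of_Icc zero_le_one ?_
          exact continuousOn_const.mul (ContinuousOn.inv₀ (by fun_prop)
            fun x hx => (by nlinarith [hx.1] : 0 < d + ρ * x).ne')
        · rw [← div_eq_mul_inv]
          exact div_le_div_of_nonneg_left (by positivity) (dist_circlePt_pos hr _) (hnear x hx)
    _ ≤ ∫ x in (0:ℝ)..(2 * π), f (θ₀ + x) := by
        refine integral_mono_interval le_rfl zero_le_one (by linarith [pi_gt_three])
          (Eventually.of_forall fun x => hf_nonneg _)
          ((hf.comp (continuous_const_add θ₀)).intervalIntegrable _ _)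
    _ = -circlePotential lam ρ r := by
        rw [circlePotential, neg_neg, integral_comp_add_left, add_zero]
        simpa using hf_periodic.intervalIntegral_add_eq θ₀ 0

end potential

theorem potential_tendsto_atBot_iff (lam ρ : ℝ) (hlam : 0 < lam) (hρ : 0 < ρ)
    (rs : ℕ → EuclideanSpace ℝ (Fin 3)) (hrs : ∀ n, rs n ∉ circleSet ρ) :
    Tendsto (fun n => circlePotential lam ρ (rs n)) atTop atBot ↔
      Tendsto (fun n => Metric.infDist (rs n) (circleSet ρ)) atTop (nhds 0) := by
  set d := fun n => infDist (rs n) (circleSet ρ)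
  have hd : ∀ n, 0 < d n := fun n => infDist_circleSet_pos (hrs n)
  rw [← tendsto_neg_atTop_iff]
  constructor
  · intro hV
    refine tendsto_of_tendsto_of_tendsto_of_le_of_le' tendsto_const_nhds
      ((tendsto_const_nhds (x := 2 * π * lam * ρ)).div_atTop hV) (.of_forall fun n => (hd n).le) ?_
    filter_upwards [hV.eventually_gt_atTop 0] with n hn
    rw [le_div_iff₀ hn, mul_comm, ← le_div_iff₀ (hd n)]
    exact neg_circlePotential_le hlam.le hρ.le (hrs n)
  · intro h0
    have hd0 : Tendsto d atTop (𝓝[>] 0) := tendsto_nhdsWithin_iff.2 ⟨h0, .of_forall hd⟩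
    have hlog : Tendsto (fun n => lam * log (1 + ρ / d n)) atTop atTop :=
      (tendsto_log_atTop.comp (tendsto_atTop_add_const_left _ 1
        (hd0.inv_tendsto_nhdsGT_zero.const_mul_atTop hρ))).const_mul_atTop hlam
    exact tendsto_atTop_mono
      (fun n => mul_log_one_add_div_le_neg_circlePotential hlam.le hρ (hrs n)) hlog
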